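/- Let r, k, N be natural numbers with 0 < k < N and let {f_i}_{i=1}^{rN+k} be an equal-norm Parseval frame for an N-dimensional Hilbert space H_N. Then the index set {1, …, rN+k} can be partitioned into r+1 sets on each of which the corresponding vectors are linearly independent. -/

import Mathlib

open scoped InnerProductSpace

/-!
Summing the Parseval identity over an orthonormal basis of a subspace `W` gives
`∑_{i ∈ S} ‖f i‖² ≤ dim W` whenever every `f i`, `i ∈ S`, lies in `W`, with `∑_i ‖f i‖² = N` for
`W = H`. For equal norms `‖f i‖² = N / (rN + k)` this says
`|S| ≤ (rN + k) / N · dim span {f i | i ∈ S} ≤ (r + 1) · dim span {f i | i ∈ S}` for every `S`,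
which is the hypothesis of the Rado–Horn theorem with `r + 1` classes.

Rado–Horn follows from Rado's theorem on independent transversals, applied in `r + 1` copies of
`H` to the sets `{Pi.single j (f i) | j}`. Rado's theorem is proved as by Welsh: while one of the
sets has two elements `x ≠ y`, deleting `x` or deleting `y` preserves Rado's condition, since two
violations would contradict the submodularity of rank.
-/

open Module Submodule Function

theorem biUnion_update_of_notMem {ι α : Type*} [DecidableEq ι] (A : ι → Finset α) {i : ι}
    {J : Finset ι} (hi : i ∉ J) (s : Finset α) :
    ⋃ j ∈ J, (update A i s j : Set α) = ⋃ j ∈ J, (A j : Set α) :=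
  Set.iUnion₂_congr fun j hj => by rw [update_of_ne (ne_of_mem_of_not_mem hj hi)]

theorem update_erase_subset {ι α : Type*} [DecidableEq ι] [DecidableEq α] (A : ι → Finset α)
    (i : ι) (x : α) (j : ι) : update A i ((A i).erase x) j ⊆ A j := by
  rcases eq_or_ne j i with rfl | hj
  · simpa using Finset.erase_subset x (A j)
  · simp [update_of_ne hj]

section Rado

variable (K : Type*) {V ι : Type*} [Field K] [AddCommGroup V] [Module K V]

theorem Set.finrank_union_add_finrank_inter_le [FiniteDimensional K V] (s t : Set V) :
    (s ∪ t).finrank K + (s ∩ t).finrank K ≤ s.finrank K + t.finrank K := by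
  rw [Set.finrank, Set.finrank, Set.finrank, Set.finrank, span_union,
    ← finrank_sup_add_finrank_inf_eq (span K s) (span K t)]
  exact Nat.add_le_add_left (Submodule.finrank_mono <|
    le_inf (span_mono Set.inter_subset_left) (span_mono Set.inter_subset_right)) _

def RadoCondition (A : ι → Finset V) : Prop :=
  ∀ J : Finset ι, J.card ≤ (⋃ i ∈ J, (A i : Set V)).finrank K

variable {K}

theorem RadoCondition.exists_finrank_le_of_not_update [DecidableEq ι] {A : ι → Finset V}
    (hA : RadoCondition K A) {i : ι} {s : Finset V} (hs : ¬ RadoCondition K (update A i s)) :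
    ∃ J : Finset ι, i ∉ J ∧ ((s : Set V) ∪ ⋃ j ∈ J, (A j : Set V)).finrank K ≤ J.card := by
  simp only [RadoCondition, not_forall, not_le] at hs
  obtain ⟨J, hJ⟩ := hs
  by_cases hi : i ∈ J
  · refine ⟨J.erase i, Finset.notMem_erase i J, Nat.le_of_lt_succ ?_⟩
    rwa [← Finset.insert_erase hi, Finset.set_biUnion_insert, update_self,
      Finset.card_insert_of_notMem (Finset.notMem_erase i J),
      biUnion_update_of_notMem A (Finset.notMem_erase i J)] at hJ
  · rw [biUnion_update_of_notMem A hi] at hJ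
    exact absurd (hA J) hJ.not_ge

theorem RadoCondition.erase_or_erase [FiniteDimensional K V] [DecidableEq ι] [DecidableEq V]
    {A : ι → Finset V} (hA : RadoCondition K A) {i : ι} {x y : V} (hxy : x ≠ y) :
    RadoCondition K (update A i ((A i).erase x)) ∨
      RadoCondition K (update A i ((A i).erase y)) := by
  by_contra! h
  obtain ⟨J₁, hi₁, hJ₁⟩ := hA.exists_finrank_le_of_not_update h.1
  obtain ⟨J₂, hi₂, hJ₂⟩ := hA.exists_finrank_le_of_not_update h.2
  set P : Set V := ↑((A i).erase x) ∪ ⋃ j ∈ J₁, (A j : Set V)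
  set Q : Set V := ↑((A i).erase y) ∪ ⋃ j ∈ J₂, (A j : Set V)
  have hunion : (⋃ j ∈ insert i (J₁ ∪ J₂), (A j : Set V)) ⊆ P ∪ Q := by
    intro z
    simp only [P, Q, Set.mem_iUnion, Finset.mem_insert, Finset.mem_union, Set.mem_union,
      Finset.coe_erase, Set.mem_sdiff, Set.mem_singleton_iff, Finset.mem_coe, exists_prop]
    grind
  have hinter : (⋃ j ∈ J₁ ∩ J₂, (A j : Set V)) ⊆ P ∩ Q := by
    intro z
    simp only [P, Q, Set.mem_iUnion, Finset.mem_inter, Set.mem_union, Set.mem_inter_iff,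
      exists_prop]
    grind
  have hsubmod := Set.finrank_union_add_finrank_inter_le K P Q
  have hrank_union := (hA _).trans (Set.finrank_mono hunion)
  have hrank_inter := (hA _).trans (Set.finrank_mono hinter)
  rw [Finset.card_insert_of_notMem (by simp [hi₁, hi₂])] at hrank_union
  have := Finset.card_union_add_card_inter J₁ J₂
  omega

theorem RadoCondition.exists_of_card_le_one [Fintype ι] {A : ι → Finset V}
    (hA : RadoCondition K A) (hA₁ : ∀ i, (A i).card ≤ 1) :
    ∃ g : ι → V, (∀ i, g i ∈ A i) ∧ LinearIndependent K g := by
  have hsingleton : ∀ i, ∃ x, A i = {x} := fun i => by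
    refine Finset.card_eq_one.1 (le_antisymm (hA₁ i) (Finset.one_le_card.2 ?_))
    by_contra hempty
    simpa [Finset.not_nonempty_iff_eq_empty.1 hempty] using hA {i}
  choose g hg using hsingleton
  refine ⟨g, fun i => by simp [hg i], linearIndependent_iff_card_le_finrank_span.2 ?_⟩
  simpa [hg, Set.range] using hA Finset.univ

/-- Rado's theorem for linear matroids. -/
theorem RadoCondition.exists_linearIndependent [FiniteDimensional K V] [Fintype ι]
    {A : ι → Finset V} (hA : RadoCondition K A) :
    ∃ g : ι → V, (∀ i, g i ∈ A i) ∧ LinearIndependent K g := by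
  classical
  induction hn : ∑ i, (A i).card using Nat.strong_induction_on generalizing A with
  | _ n ih =>
  by_cases hA₁ : ∀ i, (A i).card ≤ 1
  · exact hA.exists_of_card_le_one hA₁
  push Not at hA₁
  obtain ⟨i, hi⟩ := hA₁
  obtain ⟨x, hx, y, hy, hxy⟩ := Finset.one_lt_card.1 hi
  have shrink : ∀ z ∈ A i, RadoCondition K (update A i ((A i).erase z)) →
      ∃ g : ι → V, (∀ i, g i ∈ A i) ∧ LinearIndependent K g := by
    intro z hz hz'
    have hlt : ∑ j, (update A i ((A i).erase z) j).card < n := hn ▸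
      Finset.sum_lt_sum (fun j _ => Finset.card_le_card (update_erase_subset A i z j))
        ⟨i, Finset.mem_univ i, by simpa using Finset.card_erase_lt_of_mem hz⟩
    obtain ⟨g, hgA, hg⟩ := ih _ hlt hz' rfl
    exact ⟨g, fun j => update_erase_subset A i z j (hgA j), hg⟩
  rcases hA.erase_or_erase (i := i) hxy with h | h
  exacts [shrink x hx h, shrink y hy h]

end Rado

section RadoHorn

variable {K V : Type*} [Field K] [AddCommGroup V] [Module K V] [FiniteDimensional K V]

theorem Set.card_mul_finrank_le_finrank_iUnion_image_single (η : Type*) [Fintype η]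
    [DecidableEq η] (s : Set V) :
    Fintype.card η * s.finrank K ≤ (⋃ j : η, Pi.single j '' s : Set (η → V)).finrank K := by
  let φ : (η → span K s) →ₗ[K] (η → V) := LinearMap.compLeft (span K s).subtype η
  have hφ : Injective φ := fun a b hab => funext fun j => Subtype.ext (congrFun hab j)
  have hrange : LinearMap.range φ ≤ span K (⋃ j : η, Pi.single j '' s) := by
    rintro _ ⟨w, rfl⟩
    rw [← Finset.univ_sum_single (φ w)]
    refine sum_mem fun j _ => ?_
    have : Pi.single j ((w j : V)) ∈ (span K s).map (LinearMap.single K (fun _ => V) j) :=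
      ⟨w j, (w j).2, rfl⟩
    rw [← span_image] at this
    exact span_mono (Set.subset_iUnion_of_subset j subset_rfl) this
  calc Fintype.card η * s.finrank K = finrank K (η → span K s) := by
        simp [Set.finrank, Module.finrank_pi_fintype]
    _ = finrank K (LinearMap.range φ) := (LinearMap.finrank_range_of_inj hφ).symm
    _ ≤ _ := Submodule.finrank_mono hrange

/-- The Rado–Horn theorem. -/
theorem exists_linearIndependent_fibers {ι η : Type*} [Fintype ι] [Fintype η] (v : ι → V)
    (h : ∀ S : Finset ι, S.card ≤ Fintype.card η * (v '' S).finrank K) :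
    ∃ c : ι → η, ∀ j, LinearIndependent K ((c ⁻¹' {j}).domRestrict v) := by
  classical
  let A : ι → Finset (η → V) := fun e => Finset.univ.image fun j => Pi.single j (v e)
  have hA : RadoCondition K A := fun J => by
    refine (h J).trans ((Set.card_mul_finrank_le_finrank_iUnion_image_single η _).trans
      (Set.finrank_mono ?_))
    rintro _ ⟨_, ⟨j, rfl⟩, _, ⟨e, he, rfl⟩, rfl⟩
    exact Set.mem_biUnion he (Finset.mem_image_of_mem _ (Finset.mem_univ j))
  obtain ⟨g, hgA, hg⟩ := hA.exists_linearIndependent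
  choose c hc using fun e => Finset.mem_image.1 (hgA e)
  refine ⟨c, fun j => LinearIndependent.of_comp (LinearMap.single K (fun _ => V) j) ?_⟩
  have hfiber : LinearMap.single K (fun _ => V) j ∘ (c ⁻¹' {j}).domRestrict v =
      g ∘ Subtype.val := funext fun e => by
    simp [← (hc e).2, show c e = j from e.2]
  exact hfiber ▸ hg.comp _ Subtype.val_injective

end RadoHorn

section ParsevalFrame

variable (𝕜 : Type*) {H ι : Type*} [RCLike 𝕜] [NormedAddCommGroup H] [InnerProductSpace 𝕜 H]
  [Fintype ι]

def IsParsevalFrame (f : ι → H) : Prop :=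
  ∀ x, ∑ i, ‖⟪x, f i⟫_𝕜‖ ^ 2 = ‖x‖ ^ 2

variable {𝕜} {f : ι → H}

namespace IsParsevalFrame

theorem sum_sum_norm_inner_sq_of_orthonormal (hf : IsParsevalFrame 𝕜 f) {τ : Type*}
    [Fintype τ] {e : τ → H} (he : Orthonormal 𝕜 e) :
    ∑ t, ∑ i, ‖⟪e t, f i⟫_𝕜‖ ^ 2 = Fintype.card τ := by
  simp [hf _, he.1]

theorem sum_norm_sq_eq_finrank [FiniteDimensional 𝕜 H] (hf : IsParsevalFrame 𝕜 f) :
    ∑ i, ‖f i‖ ^ 2 = finrank 𝕜 H := by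
  let b := stdOrthonormalBasis 𝕜 H
  calc ∑ i, ‖f i‖ ^ 2 = ∑ i, ∑ t, ‖⟪b t, f i⟫_𝕜‖ ^ 2 := by
        simp only [b.sum_sq_norm_inner_right]
    _ = finrank 𝕜 H := by
        rw [Finset.sum_comm, hf.sum_sum_norm_inner_sq_of_orthonormal b.orthonormal,
          Fintype.card_fin]

theorem sum_norm_sq_le_finrank (hf : IsParsevalFrame 𝕜 f) (W : Submodule 𝕜 H)
    [FiniteDimensional 𝕜 W] {S : Finset ι} (hS : ∀ i ∈ S, f i ∈ W) :
    ∑ i ∈ S, ‖f i‖ ^ 2 ≤ finrank 𝕜 W := by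
  let b := stdOrthonormalBasis 𝕜 W
  have hnorm : ∀ i ∈ S, ‖f i‖ ^ 2 = ∑ t, ‖⟪(b t : H), f i⟫_𝕜‖ ^ 2 := fun i hi =>
    (b.sum_sq_norm_inner_right ⟨f i, hS i hi⟩).symm
  calc ∑ i ∈ S, ‖f i‖ ^ 2 = ∑ i ∈ S, ∑ t, ‖⟪(b t : H), f i⟫_𝕜‖ ^ 2 :=
        Finset.sum_congr rfl hnorm
    _ ≤ ∑ i, ∑ t, ‖⟪(b t : H), f i⟫_𝕜‖ ^ 2 :=
        Finset.sum_le_univ_sum_of_nonneg fun _ => by positivity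
    _ = finrank 𝕜 W := by
        rw [Finset.sum_comm]
        simpa using hf.sum_sum_norm_inner_sq_of_orthonormal
          (b.orthonormal.comp_linearIsometry W.subtypeₗᵢ)

theorem card_mul_finrank_le_of_norm_eq [FiniteDimensional 𝕜 H] (hf : IsParsevalFrame 𝕜 f)
    (hequal : ∀ i j, ‖f i‖ = ‖f j‖) (S : Finset ι) :
    S.card * finrank 𝕜 H ≤ Fintype.card ι * (f '' S).finrank 𝕜 := by
  obtain rfl | ⟨i, hi⟩ := S.eq_empty_or_nonempty
  · simp
  have hS : (S.card : ℝ) * ‖f i‖ ^ 2 ≤ (f '' S).finrank 𝕜 := by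
    simpa [hequal _ i, Set.finrank] using
      hf.sum_norm_sq_le_finrank (span 𝕜 (f '' S)) fun j hj => subset_span ⟨j, hj, rfl⟩
  have htotal : (Fintype.card ι : ℝ) * ‖f i‖ ^ 2 = finrank 𝕜 H := by
    simpa [hequal _ i] using hf.sum_norm_sq_eq_finrank
  have : (S.card * finrank 𝕜 H : ℝ) ≤ Fintype.card ι * (f '' S).finrank 𝕜 := by
    rw [← htotal]
    nlinarith
  exact_mod_cast this

end IsParsevalFrame

end ParsevalFrame

theorem equalNorm_parseval_partition_independent_general
    {H : Type*} [NormedAddCommGroup H] [InnerProductSpace ℂ H] [FiniteDimensional ℂ H]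
    (r k N : ℕ) (hkN : k < N) (hdim : Module.finrank ℂ H = N)
    (f : Fin (r * N + k) → H)
    (hParseval : ∀ x : H, ∑ i, ‖⟪x, f i⟫_ℂ‖ ^ 2 = ‖x‖ ^ 2)
    (hequal : ∀ i j, ‖f i‖ = ‖f j‖) :
    ∃ A : Fin (r + 1) → Set (Fin (r * N + k)),
      (⋃ j, A j) = Set.univ ∧ Pairwise (Function.onFun Disjoint A) ∧
      ∀ j, LinearIndependent ℂ ((A j).restrict f) := by
  have hcard : ∀ S : Finset (Fin (r * N + k)),
      S.card ≤ Fintype.card (Fin (r + 1)) * (f '' S).finrank ℂ := fun S => by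
    have h := IsParsevalFrame.card_mul_finrank_le_of_norm_eq hParseval hequal S
    rw [hdim, Fintype.card_fin] at h
    rw [Fintype.card_fin]
    refine Nat.le_of_mul_le_mul_right (h.trans ?_) (by omega : 0 < N)
    nlinarith
  obtain ⟨c, hc⟩ := exists_linearIndependent_fibers f hcard
  exact ⟨fun j => c ⁻¹' {j}, Set.eq_univ_of_forall fun i => Set.mem_iUnion.2 ⟨c i, rfl⟩,
    fun j j' hjj' => (Set.disjoint_singleton.2 hjj').preimage c, hc⟩

/-- An equal-norm Parseval frame of `rN + k` vectors (`0 < k < N`) for an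
`N`-dimensional Hilbert space can be partitioned into `r + 1` linearly independent sets. -/
theorem equalNorm_parseval_partition_independent
    {H : Type*} [NormedAddCommGroup H] [InnerProductSpace ℂ H] [FiniteDimensional ℂ H]
    (r k N : ℕ) (hk : 0 < k) (hkN : k < N) (hdim : Module.finrank ℂ H = N)
    (f : Fin (r * N + k) → H)
    (hParseval : ∀ x : H, ∑ i, ‖⟪x, f i⟫_ℂ‖ ^ 2 = ‖x‖ ^ 2)
    (hequal : ∀ i j, ‖f i‖ = ‖f j‖) :
    ∃ A : Fin (r + 1) → Set (Fin (r * N + k)),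
      (⋃ j, A j) = Set.univ ∧ Pairwise (Function.onFun Disjoint A) ∧
      ∀ j, LinearIndependent ℂ ((A j).restrict f) :=
  equalNorm_parseval_partition_independent_general r k N hkN hdim f hParseval hequal
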